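/- Let Ω = D_I(r,s) be the classical bounded symmetric domain of type I (r ≤ s), let m be a positive integer and k > 0, and let Ω̂_k = {(Z,W) ∈ Ω × ℂᵐ : ‖W‖² < N(Z,Z)^k} with N(Z,Z) = det(I − Z·conj(Z)ᵗ). Then the boundary point (0, …, 0, 1) (i.e., Z = 0 and W = (0,…,0,1) ∈ ℂᵐ) is a globally strongly convex boundary point of Ω̂_k; in particular, the real Hessian at this point of the defining function X(Z,W) = ‖W‖²/N(Z,Z)^k − 1 equals the block-diagonal matrix diag(2k·I_{2rs}, 2·I_{2m}), the gradient ∇X at this point is 2∂/∂u_m ≠ 0 where u_m = Re(w_m), and the closure of Ω̂_k meets the real hyperplane {Re(w_m) = 1} only in the point (0,…,0,1). -/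

import Mathlib

open Metric Set Filter Topology Matrix
open scoped ComplexOrder

noncomputable section

/-- The matrix part `Z` of a point `P = (Z, W) ∈ ℂ^{rs} × ℂᵐ`. -/
def matPart {r s m : ℕ} (P : EuclideanSpace ℂ ((Fin r × Fin s) ⊕ Fin m)) :
    Matrix (Fin r) (Fin s) ℂ :=
  Matrix.of fun i j => P (Sum.inl (i, j))

/-- The Cartan–Hartogs domain `Ω̂_k = {(Z, W) ∈ D_I(r,s) × ℂᵐ : ‖W‖² < N(Z,Z)^k}` over the
type I classical bounded symmetric domain `D_I(r,s) = {Z : I - Z·conj(Z)ᵗ > 0}`, with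
generic norm `N(Z,Z) = det(I - Z·conj(Z)ᵗ)`. -/
def CartanHartogsI (r s m : ℕ) (k : ℝ) :
    Set (EuclideanSpace ℂ ((Fin r × Fin s) ⊕ Fin m)) :=
  { P | (1 - matPart P * (matPart P)ᴴ).PosDef ∧
        (∑ i : Fin m, ‖P (Sum.inr i)‖ ^ 2) <
          ((1 - matPart P * (matPart P)ᴴ).det.re) ^ k }

/-- The defining function `X(Z, W) = ‖W‖² / N(Z,Z)^k - 1` of the Cartan–Hartogs domain. -/
def cartanHartogsDefining (r s m : ℕ) (k : ℝ)
    (P : EuclideanSpace ℂ ((Fin r × Fin s) ⊕ Fin m)) : ℝ :=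
  (∑ i : Fin m, ‖P (Sum.inr i)‖ ^ 2) /
    ((1 - matPart P * (matPart P)ᴴ).det.re) ^ k - 1

/-- `p` is a globally strongly convex (g.s.c.) boundary point of `D`: the boundary is
`C²`-smooth near `p` with nonvanishing gradient, the real Hessian of a local defining
function is positive definite on the real tangent space at `p`, and the closure of `D`
meets the real tangent hyperplane at `p` only in `p`. -/
def IsGSCBoundaryPoint {ι : Type*} [Fintype ι] (D : Set (EuclideanSpace ℂ ι))
    (p : EuclideanSpace ℂ ι) : Prop :=
  p ∈ frontier D ∧
  ∃ (U : Set (EuclideanSpace ℂ ι)) (ρ : EuclideanSpace ℂ ι → ℝ),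
    IsOpen U ∧ p ∈ U ∧ ContDiffOn ℝ 2 ρ U ∧
    (∀ z ∈ U, z ∈ D ↔ ρ z < 0) ∧
    fderiv ℝ ρ p ≠ 0 ∧
    (∀ v : EuclideanSpace ℂ ι, v ≠ 0 → fderiv ℝ ρ p v = 0 →
      0 < iteratedFDeriv ℝ 2 ρ p ![v, v]) ∧
    closure D ∩ {z | fderiv ℝ ρ p (z - p) = 0} = {p}

/-! Along a real line `t ↦ p₀ + t • v` the defining function is
`(1 + 2 Re v_{w,i₀} t + ‖v_W‖² t²) · ψ(t²) - 1` with `ψ x = (Re det (1 - x A))⁻ᵏ`, `A = v_Z v_Zᴴ`.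
Since `det (1 - x A)` is the reversed characteristic polynomial of `A`, `ψ' 0 = k tr A = k ‖v_Z‖²`,
which gives the gradient `2 Re v_{w,i₀}` and the Hessian `2k ‖v_Z‖² + 2 ‖v_W‖²` at `p₀`.

For the tangent hyperplane, the eigenvalues `μ` of `1 - Z Zᴴ` on the domain are positive, so
`det (1 - Z Zᴴ) = ∏ μ ≤ ∏ exp (μ - 1) = exp (-‖Z‖²)` and hence `‖W‖² ≤ exp (-k ‖Z‖²)` on the
closure. On `{Re w_{i₀} = 1}` we have `‖W‖² ≥ 1`, which forces `Z = 0` and then `W = e_{i₀}`. -/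

section LineDeriv

variable {E : Type*} [NormedAddCommGroup E] [NormedSpace ℝ E]

lemma hasDerivAt_comp_line {f : E → ℝ} {p v : E} {t : ℝ}
    (hf : DifferentiableAt ℝ f (p + t • v)) :
    HasDerivAt (fun τ : ℝ => f (p + τ • v)) (fderiv ℝ f (p + t • v) v) t := by
  have hl : HasDerivAt (fun τ : ℝ => p + τ • v) v t := by
    simpa using ((hasDerivAt_id t).smul_const v).const_add p
  simpa [Function.comp_def] using hf.hasFDerivAt.comp_hasDerivAt t hl

lemma iteratedFDeriv_two_apply_eq_deriv_deriv_line {f : E → ℝ} {p : E}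
    (hf : ContDiffAt ℝ 2 f p) (v : E) :
    iteratedFDeriv ℝ 2 f p ![v, v] = deriv (deriv fun t : ℝ => f (p + t • v)) 0 := by
  have hline : Tendsto (fun t : ℝ => p + t • v) (𝓝 0) (𝓝 p) := by
    simpa using (Continuous.tendsto (by fun_prop) 0 : Tendsto (fun t : ℝ => p + t • v) _ _)
  have hderiv : deriv (fun t : ℝ => f (p + t • v)) =ᶠ[𝓝 0] fun t => fderiv ℝ f (p + t • v) v := by
    filter_upwards [hline.eventually (hf.eventually (by simp))] with t ht
    exact (hasDerivAt_comp_line (ht.differentiableAt two_ne_zero)).deriv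
  have hF : DifferentiableAt ℝ (fderiv ℝ f) p :=
    (hf.fderiv_right (m := 1) (by norm_num)).differentiableAt one_ne_zero
  have hFv : DifferentiableAt ℝ (fun x => fderiv ℝ f x v) p :=
    hF.clm_apply (differentiableAt_const v)
  rw [hderiv.deriv_eq, show deriv (fun t : ℝ => fderiv ℝ f (p + t • v) v) 0 =
      lineDeriv ℝ (fun x => fderiv ℝ f x v) p v from rfl, hFv.lineDeriv_eq_fderiv,
    fderiv_clm_apply hF (differentiableAt_const v), iteratedFDeriv_two_apply]
  simp

end LineDeriv

lemma deriv_quadratic_mul_comp_sq (c₀ c₁ c₂ : ℝ) {ψ : ℝ → ℝ} (hψ : ContDiffAt ℝ 2 ψ 0) :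
    deriv (fun t => (c₀ + c₁ * t + c₂ * t ^ 2) * ψ (t ^ 2)) 0 = c₁ * ψ 0 ∧
    deriv (deriv fun t => (c₀ + c₁ * t + c₂ * t ^ 2) * ψ (t ^ 2)) 0 =
      2 * c₂ * ψ 0 + 2 * c₀ * deriv ψ 0 := by
  have hG : ∀ t : ℝ, HasDerivAt (fun t => c₀ + c₁ * t + c₂ * t ^ 2) (c₁ + 2 * c₂ * t) t :=
    fun t => ((((hasDerivAt_id t).const_mul c₁).const_add c₀).add
      ((hasDerivAt_pow 2 t).const_mul c₂)).congr_deriv (by ring)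
  have hψ' : DifferentiableAt ℝ (deriv ψ) 0 := by
    have h := (hψ.fderiv_right (m := 1) (by norm_num)).clm_apply (contDiffAt_const (c := (1 : ℝ)))
    exact h.differentiableAt one_ne_zero
  have hsq : Tendsto (fun t : ℝ => t ^ 2) (𝓝 0) (𝓝 0) := by
    simpa using (continuous_pow 2).tendsto (0 : ℝ)
  have hcomp : ∀ᶠ t in 𝓝 (0 : ℝ),
      HasDerivAt (fun t => ψ (t ^ 2)) (deriv ψ (t ^ 2) * (2 * t)) t := by
    filter_upwards [hsq.eventually (hψ.eventually (by simp))] with t ht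
    exact ((ht.differentiableAt two_ne_zero).hasDerivAt.comp (h := fun t : ℝ => t ^ 2) t
      (hasDerivAt_pow 2 t)).congr_deriv (by norm_num)
  have hf : ∀ᶠ t in 𝓝 (0 : ℝ), HasDerivAt (fun t => (c₀ + c₁ * t + c₂ * t ^ 2) * ψ (t ^ 2))
      ((c₁ + 2 * c₂ * t) * ψ (t ^ 2) +
        (c₀ + c₁ * t + c₂ * t ^ 2) * (deriv ψ (t ^ 2) * (2 * t))) t := by
    filter_upwards [hcomp] with t ht
    exact (hG t).mul ht
  refine ⟨by simpa using hf.self_of_nhds.deriv, ?_⟩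
  have hψ'sq : HasDerivAt (fun t : ℝ => deriv ψ (t ^ 2)) 0 0 := by
    have h : HasDerivAt (deriv ψ) (deriv (deriv ψ) 0) ((0 : ℝ) ^ 2) := by
      simpa using hψ'.hasDerivAt
    exact (h.comp (h := fun t : ℝ => t ^ 2) 0 (hasDerivAt_pow 2 0)).congr_deriv (by simp)
  have hG' : HasDerivAt (fun t => c₁ + 2 * c₂ * t) (2 * c₂) 0 :=
    (((hasDerivAt_id (0 : ℝ)).const_mul (2 * c₂)).const_add c₁).congr_deriv (mul_one _)
  have h2 : HasDerivAt (fun t => (c₁ + 2 * c₂ * t) * ψ (t ^ 2) +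
      (c₀ + c₁ * t + c₂ * t ^ 2) * (deriv ψ (t ^ 2) * (2 * t)))
      (2 * c₂ * ψ 0 + 2 * c₀ * deriv ψ 0) 0 :=
    ((hG'.mul hcomp.self_of_nhds).add
      ((hG 0).mul (hψ'sq.mul ((hasDerivAt_id (0 : ℝ)).const_mul 2)))).congr_deriv
      (by
        simp only [id, Pi.mul_apply, ne_eq, OfNat.ofNat_ne_zero, not_false_eq_true, zero_pow]
        ring)
  have hderiv : deriv (fun t => (c₀ + c₁ * t + c₂ * t ^ 2) * ψ (t ^ 2)) =ᶠ[𝓝 0] fun t =>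
      (c₁ + 2 * c₂ * t) * ψ (t ^ 2) + (c₀ + c₁ * t + c₂ * t ^ 2) * (deriv ψ (t ^ 2) * (2 * t)) :=
    hf.mono fun t ht => ht.deriv
  rw [hderiv.deriv_eq, h2.deriv]

section Polynomial

open Polynomial

lemma hasDerivAt_re_eval (q : ℂ[X]) (x : ℝ) :
    HasDerivAt (fun x : ℝ => (q.eval (x : ℂ)).re) (q.derivative.eval (x : ℂ)).re x :=
  Complex.reCLM.hasFDerivAt.comp_hasDerivAt x ((q.hasDerivAt (x : ℂ)).comp_ofReal)

lemma contDiff_re_eval (q : ℂ[X]) (n : WithTop ℕ∞) :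
    ContDiff ℝ n fun x : ℝ => (q.eval (x : ℂ)).re :=
  Complex.reCLM.contDiff.comp
    (((q.contDiff_aeval n).restrict_scalars ℝ).comp Complex.ofRealCLM.contDiff)

lemma inv_rpow_re_eval_zero (q : ℂ[X]) (hq : q.eval 0 = 1) (k : ℝ) :
    ContDiffAt ℝ 2 (fun x : ℝ => ((q.eval (x : ℂ)).re ^ k)⁻¹) 0 ∧
    ((q.eval ((0 : ℝ) : ℂ)).re ^ k)⁻¹ = 1 ∧
    deriv (fun x : ℝ => ((q.eval (x : ℂ)).re ^ k)⁻¹) 0 = -k * (q.coeff 1).re := by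
  refine ⟨((contDiff_re_eval q 2).contDiffAt.rpow_const_of_ne (by simp [hq])).inv (by simp [hq]),
    by simp [hq], ?_⟩
  have h : HasDerivAt (fun x : ℝ => ((q.eval (x : ℂ)).re ^ k)⁻¹) _ 0 :=
    ((hasDerivAt_re_eval q 0).rpow_const (p := k) (Or.inl (by simp [hq]))).inv (by simp [hq])
  rw [h.deriv]
  simp [hq, ← coeff_zero_eq_eval_zero, coeff_derivative, mul_comm]

end Polynomial

namespace Matrix

variable {𝕜 m n : Type*} [RCLike 𝕜] [Fintype m] [Fintype n]

lemma re_trace_mul_conjTranspose_self (Z : Matrix m n 𝕜) :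
    RCLike.re (Z * Zᴴ).trace = ∑ i, ∑ j, ‖Z i j‖ ^ 2 := by
  simp only [trace, diag, mul_apply, conjTranspose_apply, RCLike.star_def, RCLike.mul_conj,
    map_sum, ← RCLike.ofReal_pow, RCLike.ofReal_re]

variable [DecidableEq m]

lemma eval_charpolyRev_eq_det {R : Type*} [CommRing R] (A : Matrix m m R) (x : R) :
    A.charpolyRev.eval x = (1 - x • A).det := by
  rw [charpolyRev, ← Polynomial.coe_evalRingHom, RingHom.map_det]
  congr 1
  ext i j
  by_cases h : i = j <;> simp [h, mul_comm x]

lemma det_one_sub_smul_mul_conjTranspose_smul (M : Matrix m n ℂ) (t : ℝ) :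
    (1 - (t • M) * (t • M)ᴴ).det = (M * Mᴴ).charpolyRev.eval ((t ^ 2 : ℝ) : ℂ) := by
  rw [eval_charpolyRev_eq_det]
  congr 2
  ext i j
  simp only [smul_apply, mul_apply, conjTranspose_apply, smul_eq_mul, Complex.real_smul,
    Finset.mul_sum, star_mul', Complex.star_def, Complex.conj_ofReal, Complex.ofReal_pow]
  exact Finset.sum_congr rfl fun l _ => by ring

lemma PosSemidef.re_det_le_exp {H : Matrix m m 𝕜} (hH : H.PosSemidef) :
    RCLike.re H.det ≤ Real.exp (RCLike.re H.trace - Fintype.card m) := by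
  have hdet : RCLike.re H.det = ∏ i, hH.1.eigenvalues i := by
    rw [hH.1.det_eq_prod_eigenvalues, ← RCLike.ofReal_prod, RCLike.ofReal_re]
  have htr : RCLike.re H.trace - Fintype.card m = ∑ i, (hH.1.eigenvalues i - 1) := by
    simp [hH.1.trace_eq_sum_eigenvalues]
  rw [hdet, htr, Real.exp_sum]
  exact Finset.prod_le_prod (fun i _ => hH.eigenvalues_nonneg i)
    fun i _ => by linarith [Real.add_one_le_exp (hH.1.eigenvalues i - 1)]

lemma PosSemidef.eigenvalues_one_sub_le_one {A : Matrix m m 𝕜} (hA : A.PosSemidef)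
    (hH : (1 - A).IsHermitian) (i : m) : hH.eigenvalues i ≤ 1 := by
  have hu : RCLike.re (star ⇑(hH.eigenvectorBasis i) ⬝ᵥ ⇑(hH.eigenvectorBasis i)) = 1 := by
    rw [dotProduct_comm, ← EuclideanSpace.inner_eq_star_dotProduct, inner_self_eq_norm_sq,
      hH.eigenvectorBasis.orthonormal.1 i, one_pow]
  rw [hH.eigenvalues_eq, sub_mulVec, one_mulVec, dotProduct_sub, map_sub, hu]
  linarith [hA.re_dotProduct_nonneg (hH.eigenvectorBasis i)]

lemma PosSemidef.posDef_one_sub {A : Matrix m m 𝕜} (hA : A.PosSemidef)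
    (htr : RCLike.re A.trace < 1) : (1 - A).PosDef := by
  have hH : (1 - A).IsHermitian := isHermitian_one.sub hA.1
  have hsum : ∑ j, (1 - hH.eigenvalues j) = RCLike.re A.trace := by
    have h := congrArg RCLike.re hH.trace_eq_sum_eigenvalues
    rw [trace_sub, trace_one, map_sub, map_sum] at h
    simp only [RCLike.natCast_re, RCLike.ofReal_re] at h
    rw [Finset.sum_sub_distrib, Finset.sum_const, Finset.card_univ, nsmul_one]
    linarith
  refine hH.posDef_iff_eigenvalues_pos.mpr fun i => ?_
  have := Finset.single_le_sum (fun j _ => sub_nonneg.mpr (hA.eigenvalues_one_sub_le_one hH j))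
    (Finset.mem_univ i)
  linarith

end Matrix

section CartanHartogs

variable {r s m : ℕ}

local notation "𝔼" => EuclideanSpace ℂ ((Fin r × Fin s) ⊕ Fin m)

lemma matPart_smul (t : ℝ) (P : 𝔼) : matPart (t • P) = t • matPart P := rfl

lemma matPart_single_inr (i : Fin m) (a : ℂ) :
    matPart (EuclideanSpace.single (Sum.inr i) a : 𝔼) = 0 := by
  ext; simp [matPart]

lemma matPart_single_add_smul (i₀ : Fin m) (t : ℝ) (v : 𝔼) :
    matPart (EuclideanSpace.single (Sum.inr i₀) 1 + t • v) = t • matPart v := by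
  ext; simp [matPart]

lemma sum_norm_sq_matPart (P : 𝔼) :
    ∑ i, ∑ j, ‖matPart P i j‖ ^ 2 = ∑ q, Complex.normSq (P (Sum.inl q)) := by
  simp [matPart, Fintype.sum_prod_type, Complex.normSq_eq_norm_sq]

lemma norm_sq_eq_sum_inl_add_sum_inr (P : 𝔼) :
    ‖P‖ ^ 2 = ∑ q, Complex.normSq (P (Sum.inl q)) + ∑ i, Complex.normSq (P (Sum.inr i)) := by
  simp [EuclideanSpace.norm_sq_eq, Fintype.sum_sum_type, Complex.normSq_eq_norm_sq]

lemma norm_sub_single_sq {i₀ : Fin m} {P : 𝔼} (hP : (P (Sum.inr i₀)).re = 1) :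
    ‖P - EuclideanSpace.single (Sum.inr i₀) 1‖ ^ 2 =
      ∑ q, Complex.normSq (P (Sum.inl q)) + ∑ i, ‖P (Sum.inr i)‖ ^ 2 - 1 := by
  rw [norm_sub_sq (𝕜 := ℂ), norm_sq_eq_sum_inl_add_sum_inr, EuclideanSpace.inner_single_right]
  simp only [Complex.normSq_eq_norm_sq, one_mul, RCLike.conj_re, RCLike.re_to_complex, hP, mul_one,
    PiLp.norm_single, norm_one, one_pow]
  ring

lemma sum_norm_sq_single_add_smul (i₀ : Fin m) (v : 𝔼) (t : ℝ) :
    ∑ i, ‖(EuclideanSpace.single (Sum.inr i₀) 1 + t • v : 𝔼) (Sum.inr i)‖ ^ 2 =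
      1 + 2 * (v (Sum.inr i₀)).re * t + (∑ i, Complex.normSq (v (Sum.inr i))) * t ^ 2 := by
  have hterm : ∀ i, ‖(EuclideanSpace.single (Sum.inr i₀) 1 + t • v : 𝔼) (Sum.inr i)‖ ^ 2 =
      (if i = i₀ then 1 + 2 * (v (Sum.inr i₀)).re * t else 0) +
        Complex.normSq (v (Sum.inr i)) * t ^ 2 := by
    intro i
    rw [Complex.sq_norm]
    by_cases h : i = i₀
    · simp only [h, PiLp.add_apply, PiLp.single_eq_same, PiLp.smul_apply, Complex.real_smul,
        Complex.normSq_apply, Complex.add_re, Complex.add_im, Complex.mul_re, Complex.mul_im,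
        Complex.one_re, Complex.one_im, Complex.ofReal_re, Complex.ofReal_im, if_true]
      ring
    · simp only [h, PiLp.add_apply, ne_eq, Sum.inr.injEq, not_false_eq_true, PiLp.single_eq_of_ne,
        PiLp.smul_apply, Complex.real_smul, zero_add, Complex.normSq_apply, Complex.mul_re,
        Complex.mul_im, Complex.ofReal_re, Complex.ofReal_im, if_false]
      ring
  rw [Finset.sum_congr rfl fun i _ => hterm i]
  simp [Finset.sum_add_distrib, Finset.sum_mul]

lemma cartanHartogsDefining_single_add_smul (k : ℝ) (i₀ : Fin m) (v : 𝔼) (t : ℝ) :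
    cartanHartogsDefining r s m k (EuclideanSpace.single (Sum.inr i₀) 1 + t • v) =
      (1 + 2 * (v (Sum.inr i₀)).re * t + (∑ i, Complex.normSq (v (Sum.inr i))) * t ^ 2) *
        (((matPart v * (matPart v)ᴴ).charpolyRev.eval ((t ^ 2 : ℝ) : ℂ)).re ^ k)⁻¹ - 1 := by
  rw [cartanHartogsDefining, sum_norm_sq_single_add_smul, matPart_single_add_smul,
    det_one_sub_smul_mul_conjTranspose_smul, div_eq_mul_inv]

lemma contDiff_sum_norm_sq_inr {n : WithTop ℕ∞} :
    ContDiff ℝ n fun P : 𝔼 => ∑ i, ‖P (Sum.inr i)‖ ^ 2 :=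
  ContDiff.sum fun _ _ => (contDiff_norm_sq ℝ).comp (by fun_prop)

lemma contDiff_re_det_one_sub_matPart_mul_conjTranspose {n : WithTop ℕ∞} :
    ContDiff ℝ n fun P : 𝔼 => ((1 - matPart P * (matPart P)ᴴ).det).re := by
  have hconj : ∀ x, ContDiff ℝ n fun P : 𝔼 => starRingEnd ℂ (P x) :=
    fun x => Complex.conjCLE.contDiff.comp (by fun_prop)
  refine Complex.reCLM.contDiff.comp ?_
  simp only [det_apply, Matrix.sub_apply, mul_apply, conjTranspose_apply, matPart, of_apply,
    RCLike.star_def]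
  fun_prop

lemma contDiffAt_cartanHartogsDefining (k : ℝ) {P : 𝔼}
    (hP : 0 < ((1 - matPart P * (matPart P)ᴴ).det).re) :
    ContDiffAt ℝ 2 (cartanHartogsDefining r s m k) P :=
  (contDiff_sum_norm_sq_inr.contDiffAt.div
    (contDiff_re_det_one_sub_matPart_mul_conjTranspose.contDiffAt.rpow_const_of_ne hP.ne')
    (Real.rpow_pos_of_pos hP k).ne').sub contDiffAt_const

lemma contDiffAt_cartanHartogsDefining_single (k : ℝ) (i₀ : Fin m) :
    ContDiffAt ℝ 2 (cartanHartogsDefining r s m k) (EuclideanSpace.single (Sum.inr i₀) 1) :=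
  contDiffAt_cartanHartogsDefining k (by simp [matPart_single_inr])

lemma fderiv_cartanHartogsDefining_single (k : ℝ) (i₀ : Fin m) (v : 𝔼) :
    fderiv ℝ (cartanHartogsDefining r s m k) (EuclideanSpace.single (Sum.inr i₀) 1) v =
      2 * (v (Sum.inr i₀)).re := by
  rw [← ((contDiffAt_cartanHartogsDefining_single k i₀).differentiableAt
    two_ne_zero).lineDeriv_eq_fderiv, lineDeriv]
  simp_rw [cartanHartogsDefining_single_add_smul, deriv_sub_const]
  obtain ⟨hψ, hψ0, -⟩ := inv_rpow_re_eval_zero (matPart v * (matPart v)ᴴ).charpolyRev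
    eval_charpolyRev k
  rw [(deriv_quadratic_mul_comp_sq _ _ _ hψ).1, hψ0, mul_one]

lemma fderiv_cartanHartogsDefining_single_ne_zero (k : ℝ) (i₀ : Fin m) :
    fderiv ℝ (cartanHartogsDefining r s m k) (EuclideanSpace.single (Sum.inr i₀) 1) ≠ 0 := by
  intro h
  have := fderiv_cartanHartogsDefining_single (r := r) (s := s) k i₀
    (EuclideanSpace.single (Sum.inr i₀) 1)
  simp [h] at this

lemma iteratedFDeriv_two_cartanHartogsDefining_single (k : ℝ) (i₀ : Fin m) (v : 𝔼) :
    iteratedFDeriv ℝ 2 (cartanHartogsDefining r s m k) (EuclideanSpace.single (Sum.inr i₀) 1)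
      ![v, v] = 2 * k * (∑ q, Complex.normSq (v (Sum.inl q))) +
        2 * (∑ i, Complex.normSq (v (Sum.inr i))) := by
  rw [iteratedFDeriv_two_apply_eq_deriv_deriv_line (contDiffAt_cartanHartogsDefining_single k i₀)]
  simp_rw [cartanHartogsDefining_single_add_smul, deriv_sub_const_fun]
  obtain ⟨hψ, hψ0, hψ'⟩ := inv_rpow_re_eval_zero (matPart v * (matPart v)ᴴ).charpolyRev
    eval_charpolyRev k
  rw [(deriv_quadratic_mul_comp_sq _ _ _ hψ).2, hψ0, hψ', coeff_charpolyRev_eq_neg_trace,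
    Complex.neg_re, ← RCLike.re_to_complex, re_trace_mul_conjTranspose_self, sum_norm_sq_matPart]
  ring

lemma posDef_one_sub_matPart_mul_conjTranspose {P : 𝔼}
    (hP : ∑ q, Complex.normSq (P (Sum.inl q)) < 1) :
    (1 - matPart P * (matPart P)ᴴ).PosDef :=
  (posSemidef_self_mul_conjTranspose _).posDef_one_sub
    (by rwa [re_trace_mul_conjTranspose_self, sum_norm_sq_matPart])

lemma mem_cartanHartogsI_iff_cartanHartogsDefining_neg (k : ℝ) {P : 𝔼}
    (hP : (1 - matPart P * (matPart P)ᴴ).PosDef) :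
    P ∈ CartanHartogsI r s m k ↔ cartanHartogsDefining r s m k P < 0 := by
  have hN : 0 < ((1 - matPart P * (matPart P)ᴴ).det).re ^ k :=
    Real.rpow_pos_of_pos (Complex.pos_iff.mp hP.det_pos).1 k
  simp [CartanHartogsI, cartanHartogsDefining, hP, div_lt_one hN]

lemma re_det_one_sub_mul_conjTranspose_le_exp {P : 𝔼}
    (hP : (1 - matPart P * (matPart P)ᴴ).PosDef) :
    ((1 - matPart P * (matPart P)ᴴ).det).re ≤ Real.exp (-∑ q, Complex.normSq (P (Sum.inl q))) := by
  have h := hP.posSemidef.re_det_le_exp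
  rw [trace_sub, trace_one, map_sub, re_trace_mul_conjTranspose_self, sum_norm_sq_matPart] at h
  simpa using h

lemma cartanHartogsI_subset {k : ℝ} (hk : 0 ≤ k) :
    CartanHartogsI r s m k ⊆
      {P | ∑ i, ‖P (Sum.inr i)‖ ^ 2 ≤ Real.exp (-k * ∑ q, Complex.normSq (P (Sum.inl q)))} := by
  rintro P ⟨hP, hS⟩
  calc ∑ i, ‖P (Sum.inr i)‖ ^ 2 ≤ ((1 - matPart P * (matPart P)ᴴ).det).re ^ k := hS.le
    _ ≤ Real.exp (-∑ q, Complex.normSq (P (Sum.inl q))) ^ k :=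
      Real.rpow_le_rpow (Complex.pos_iff.mp hP.det_pos).1.le
        (re_det_one_sub_mul_conjTranspose_le_exp hP) hk
    _ = _ := by rw [← Real.exp_mul, neg_mul, mul_comm, neg_mul]

lemma closure_cartanHartogsI_subset {k : ℝ} (hk : 0 ≤ k) :
    closure (CartanHartogsI r s m k) ⊆
      {P | ∑ i, ‖P (Sum.inr i)‖ ^ 2 ≤ Real.exp (-k * ∑ q, Complex.normSq (P (Sum.inl q)))} :=
  closure_minimal (cartanHartogsI_subset hk)
    (isClosed_le (contDiff_sum_norm_sq_inr (n := 0)).continuous (by fun_prop))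

lemma single_notMem_cartanHartogsI (k : ℝ) (i₀ : Fin m) :
    EuclideanSpace.single (Sum.inr i₀) 1 ∉ CartanHartogsI r s m k := by
  rintro ⟨-, h⟩
  simp [matPart_single_inr, apply_ite (fun z : ℂ => ‖z‖ ^ 2)] at h

lemma single_mem_closure_cartanHartogsI (k : ℝ) (i₀ : Fin m) :
    EuclideanSpace.single (Sum.inr i₀) 1 ∈ closure (CartanHartogsI r s m k) := by
  have hmem : ∀ t ∈ Ioo (0 : ℝ) 1,
      t • EuclideanSpace.single (Sum.inr i₀) 1 ∈ CartanHartogsI r s m k := by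
    intro t ⟨ht₀, ht₁⟩
    refine ⟨by simpa [matPart_smul, matPart_single_inr] using PosDef.one, ?_⟩
    simpa [matPart_smul, matPart_single_inr, apply_ite (fun z : ℂ => ‖z‖ ^ 2), abs_lt] using
      ⟨by linarith, ht₁⟩
  have htend : Tendsto (fun t : ℝ => t • (EuclideanSpace.single (Sum.inr i₀) 1 : 𝔼)) (𝓝[<] 1)
      (𝓝 (EuclideanSpace.single (Sum.inr i₀) 1)) := by
    simpa using ((tendsto_id (x := 𝓝 (1 : ℝ))).mono_left nhdsWithin_le_nhds).smul_const
      (EuclideanSpace.single (Sum.inr i₀) 1 : 𝔼)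
  exact mem_closure_of_tendsto htend (mem_of_superset (Ioo_mem_nhdsLT zero_lt_one) hmem)

lemma closure_cartanHartogsI_inter_eq_singleton {k : ℝ} (hk : 0 < k) (i₀ : Fin m) :
    closure (CartanHartogsI r s m k) ∩ {P | (P (Sum.inr i₀)).re = 1} =
      {EuclideanSpace.single (Sum.inr i₀) 1} := by
  refine eq_singleton_iff_unique_mem.mpr
    ⟨⟨single_mem_closure_cartanHartogsI k i₀, by simp⟩, fun P ⟨hP, hre⟩ => ?_⟩
  have hS := closure_cartanHartogsI_subset hk.le hP
  simp only [mem_ofPred_eq] at hS hre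
  set c := ∑ q, Complex.normSq (P (Sum.inl q))
  have hc : 0 ≤ c := Finset.sum_nonneg fun q _ => Complex.normSq_nonneg _
  have h1 : 1 ≤ ∑ i, ‖P (Sum.inr i)‖ ^ 2 := by
    refine le_trans ?_ (Finset.single_le_sum (fun i _ => sq_nonneg ‖P (Sum.inr i)‖)
      (Finset.mem_univ i₀))
    rw [Complex.sq_norm, Complex.normSq_apply, hre]
    nlinarith [mul_self_nonneg (P (Sum.inr i₀)).im]
  have hc0 : c = 0 := by
    have : 0 ≤ -k * c := Real.one_le_exp_iff.mp (h1.trans hS)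
    nlinarith
  have hdist := norm_sub_single_sq hre
  rw [hc0, mul_zero, Real.exp_zero] at hS
  rw [← sub_eq_zero, ← norm_eq_zero, ← sq_eq_zero_iff (M₀ := ℝ)]
  linarith

lemma iteratedFDeriv_two_cartanHartogsDefining_single_pos {k : ℝ} (hk : 0 < k) (i₀ : Fin m)
    {v : 𝔼} (hv : v ≠ 0) :
    0 < iteratedFDeriv ℝ 2 (cartanHartogsDefining r s m k)
      (EuclideanSpace.single (Sum.inr i₀) 1) ![v, v] := by
  have hv' : 0 < ‖v‖ ^ 2 := by positivity
  rw [norm_sq_eq_sum_inl_add_sum_inr] at hv'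
  rw [iteratedFDeriv_two_cartanHartogsDefining_single]
  have hc : 0 ≤ ∑ q, Complex.normSq (v (Sum.inl q)) :=
    Finset.sum_nonneg fun q _ => Complex.normSq_nonneg _
  have hb : 0 ≤ ∑ i, Complex.normSq (v (Sum.inr i)) :=
    Finset.sum_nonneg fun i _ => Complex.normSq_nonneg _
  rcases hc.eq_or_lt with hc0 | hcpos
  · rw [← hc0] at hv' ⊢; linarith
  · nlinarith [mul_pos hk hcpos]

lemma setOf_fderiv_cartanHartogsDefining_single_sub_eq_zero (k : ℝ) (i₀ : Fin m) :
    {P : 𝔼 | fderiv ℝ (cartanHartogsDefining r s m k) (EuclideanSpace.single (Sum.inr i₀) 1)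
      (P - EuclideanSpace.single (Sum.inr i₀) 1) = 0} = {P | (P (Sum.inr i₀)).re = 1} := by
  ext P
  simp [fderiv_cartanHartogsDefining_single, sub_eq_zero]

theorem isGSCBoundaryPoint_cartanHartogsI_single {k : ℝ} (hk : 0 < k) (i₀ : Fin m) :
    IsGSCBoundaryPoint (CartanHartogsI r s m k) (EuclideanSpace.single (Sum.inr i₀) 1) := by
  refine ⟨⟨single_mem_closure_cartanHartogsI k i₀,
      fun h => single_notMem_cartanHartogsI k i₀ (interior_subset h)⟩,
    {P | ∑ q, Complex.normSq (P (Sum.inl q)) < 1}, cartanHartogsDefining r s m k,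
    isOpen_lt (by fun_prop) continuous_const, by simp,
    fun P hP => (contDiffAt_cartanHartogsDefining k (Complex.pos_iff.mp
      (posDef_one_sub_matPart_mul_conjTranspose hP).det_pos).1).contDiffWithinAt,
    fun P hP => mem_cartanHartogsI_iff_cartanHartogsDefining_neg k
      (posDef_one_sub_matPart_mul_conjTranspose hP),
    fderiv_cartanHartogsDefining_single_ne_zero k i₀,
    fun v hv _ => iteratedFDeriv_two_cartanHartogsDefining_single_pos hk i₀ hv, ?_⟩
  rw [setOf_fderiv_cartanHartogsDefining_single_sub_eq_zero]
  exact closure_cartanHartogsI_inter_eq_singleton hk i₀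

end CartanHartogs

theorem cartanHartogs_gsc_boundary_point_general (r s : ℕ)
    (m : ℕ) (k : ℝ) (hk : 0 < k)
    (i₀ : Fin m)
    (p₀ : EuclideanSpace ℂ ((Fin r × Fin s) ⊕ Fin m))
    (hp₀ : p₀ = WithLp.toLp 2 (Sum.elim (fun _ => (0 : ℂ)) (fun i => if i = i₀ then 1 else 0))) :
    IsGSCBoundaryPoint (CartanHartogsI r s m k) p₀ ∧
    (∀ v : EuclideanSpace ℂ ((Fin r × Fin s) ⊕ Fin m),
      iteratedFDeriv ℝ 2 (cartanHartogsDefining r s m k) p₀ ![v, v] =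
        2 * k * (∑ q : Fin r × Fin s, Complex.normSq (v (Sum.inl q))) +
        2 * (∑ i : Fin m, Complex.normSq (v (Sum.inr i)))) ∧
    (∀ v : EuclideanSpace ℂ ((Fin r × Fin s) ⊕ Fin m),
      fderiv ℝ (cartanHartogsDefining r s m k) p₀ v = 2 * (v (Sum.inr i₀)).re) ∧
    fderiv ℝ (cartanHartogsDefining r s m k) p₀ ≠ 0 ∧
    closure (CartanHartogsI r s m k) ∩ { P | (P (Sum.inr i₀)).re = 1 } = {p₀} := by
  obtain rfl : p₀ = EuclideanSpace.single (Sum.inr i₀) 1 := by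
    rw [hp₀]; ext (q | i) <;> simp [PiLp.single_apply]
  exact ⟨isGSCBoundaryPoint_cartanHartogsI_single hk i₀,
    iteratedFDeriv_two_cartanHartogsDefining_single k i₀,
    fderiv_cartanHartogsDefining_single k i₀,
    fderiv_cartanHartogsDefining_single_ne_zero k i₀,
    closure_cartanHartogsI_inter_eq_singleton hk i₀⟩

/-- Let `Ω̂_k` be the Cartan–Hartogs domain over `D_I(r,s)` (`r ≤ s`), `m ≥ 1`, `k > 0`.
Then the boundary point `p₀ = (0, …, 0, 1)` (with `Z = 0`, `W = (0, …, 0, 1)`) is a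
globally strongly convex boundary point of `Ω̂_k`; in particular, the real Hessian at `p₀`
of `X(Z,W) = ‖W‖²/N(Z,Z)^k − 1` is the block diagonal matrix `diag(2k·I_{2rs}, 2·I_{2m})`
(as a quadratic form, `v ↦ 2k‖v_Z‖² + 2‖v_W‖²`), the gradient of `X` at `p₀` is
`2·∂/∂u_m ≠ 0` where `u_m = Re w_m`, and the closure of `Ω̂_k` meets `{Re w_m = 1}` only
in `p₀`. -/
theorem cartanHartogs_gsc_boundary_point (r s : ℕ) (hr : 0 < r) (hrs : r ≤ s)
    (m : ℕ) (k : ℝ) (hk : 0 < k)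
    (i₀ : Fin m) (hi₀ : (i₀ : ℕ) = m - 1)
    (p₀ : EuclideanSpace ℂ ((Fin r × Fin s) ⊕ Fin m))
    (hp₀ : p₀ = WithLp.toLp 2 (Sum.elim (fun _ => (0 : ℂ)) (fun i => if i = i₀ then 1 else 0))) :
    IsGSCBoundaryPoint (CartanHartogsI r s m k) p₀ ∧
    (∀ v : EuclideanSpace ℂ ((Fin r × Fin s) ⊕ Fin m),
      iteratedFDeriv ℝ 2 (cartanHartogsDefining r s m k) p₀ ![v, v] =
        2 * k * (∑ q : Fin r × Fin s, Complex.normSq (v (Sum.inl q))) +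
        2 * (∑ i : Fin m, Complex.normSq (v (Sum.inr i)))) ∧
    (∀ v : EuclideanSpace ℂ ((Fin r × Fin s) ⊕ Fin m),
      fderiv ℝ (cartanHartogsDefining r s m k) p₀ v = 2 * (v (Sum.inr i₀)).re) ∧
    fderiv ℝ (cartanHartogsDefining r s m k) p₀ ≠ 0 ∧
    closure (CartanHartogsI r s m k) ∩ { P | (P (Sum.inr i₀)).re = 1 } = {p₀} :=
  cartanHartogs_gsc_boundary_point_general r s m k hk i₀ p₀ hp₀
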